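/- Suppose L ∈ ℝ^{(n−1)×d} is a stationary point of f_L (VᵀK*(F(VL))VL = 0) that is not a global minimizer (F(VL) ≠ 0), and suppose rank(L) < d. Then the second-order necessary optimality conditions fail at L: there exists ΔL ∈ ℝ^{(n−1)×d} such that ‖K((VL)(VΔL)ᵀ + (VΔL)(VL)ᵀ)‖² + 2⟨F(VL), K((VΔL)(VΔL)ᵀ)⟩ < 0. -/

import Mathlib

/-! If the Hessian form were nonnegative at `P = VL`, testing it on `ΔL = v uᵀ` with `Lu = 0`
kills its first term and leaves `2‖u‖² vᵀ(VᵀK*(F)V)v`, so `M = VᵀK*(F)V` is positive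
semidefinite. As `VVᵀ` fixes centred vectors, `P̄ = VW` with `W = VᵀP̄`. Pairing `F` with
`F = K(PPᵀ) - K(P̄P̄ᵀ)` through the adjoint `K*`, stationarity kills the first term, so
`‖F‖² = -tr(WᵀMW) ≤ 0` and `F = 0`. -/

open Matrix

attribute [local instance] Matrix.frobeniusNormedAddCommGroup Matrix.frobeniusNormedSpace

noncomputable section

/-- The all-ones vector in `ℝⁿ`. -/
def eV (n : ℕ) : Fin n → ℝ := fun _ => 1

/-- The Lindenstrauss operator `K(G) = diag(G)eᵀ + e diag(G)ᵀ − 2G`. -/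
def Kop {n : ℕ} (G : Matrix (Fin n) (Fin n) ℝ) : Matrix (Fin n) (Fin n) ℝ :=
  vecMulVec G.diag (eV n) + vecMulVec (eV n) G.diag - (2 : ℝ) • G

/-- The adjoint `K*(S) = 2(Diag(Se) − S)`. -/
def Kstar {n : ℕ} (S : Matrix (Fin n) (Fin n) ℝ) : Matrix (Fin n) (Fin n) ℝ :=
  (2 : ℝ) • (Matrix.diagonal (S *ᵥ eV n) - S)

/-- `F(P) = K(PPᵀ) − D̄`, where `D̄ = K(P̄P̄ᵀ)`. -/
def Fm {n d : ℕ} (Pbar P : Matrix (Fin n) (Fin d) ℝ) : Matrix (Fin n) (Fin n) ℝ :=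
  Kop (P * Pᵀ) - Kop (Pbar * Pbarᵀ)

/-- `f(P) = (1/2)‖F(P)‖²` with the Frobenius norm. -/
def fObj {n d : ℕ} (Pbar P : Matrix (Fin n) (Fin d) ℝ) : ℝ :=
  (1 / 2) * ‖Fm Pbar P‖ ^ 2

/-- The Hessian quadratic form of `f` at `P`:
`Q_P(ΔP) = ‖K(PΔPᵀ + ΔPPᵀ)‖² + 2⟨F(P), K(ΔPΔPᵀ)⟩`. -/
def QForm {n d : ℕ} (Pbar P ΔP : Matrix (Fin n) (Fin d) ℝ) : ℝ :=
  ‖Kop (P * ΔPᵀ + ΔP * Pᵀ)‖ ^ 2 +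
    2 * Matrix.trace ((Fm Pbar P)ᵀ * Kop (ΔP * ΔPᵀ))

/-- `x` is a local minimizer of `g`: there is `δ > 0` with `g x ≤ g y` whenever `‖y − x‖ ≤ δ`. -/
def IsLocMin {E : Type*} [SeminormedAddCommGroup E] (g : E → ℝ) (x : E) : Prop :=
  ∃ δ > 0, ∀ y, ‖y - x‖ ≤ δ → g x ≤ g y

section Lindenstrauss

variable {n : ℕ}

lemma Kop_apply (G : Matrix (Fin n) (Fin n) ℝ) (i j : Fin n) :
    Kop G i j = G i i + G j j - 2 * G i j := by
  simp [Kop, vecMulVec_apply, eV]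

lemma Kop_smul (c : ℝ) (G : Matrix (Fin n) (Fin n) ℝ) : Kop (c • G) = c • Kop G := by
  ext i j
  simp only [Kop_apply, Matrix.smul_apply, smul_eq_mul]
  ring

lemma Kop_zero : Kop (0 : Matrix (Fin n) (Fin n) ℝ) = 0 := by
  simpa using Kop_smul 0 0

lemma isSymm_Kop {G : Matrix (Fin n) (Fin n) ℝ} (hG : G.IsSymm) : (Kop G).IsSymm := by
  ext i j
  simp only [transpose_apply, Kop_apply, hG.apply i j]
  ring

lemma isSymm_Kstar {S : Matrix (Fin n) (Fin n) ℝ} (hS : S.IsSymm) : (Kstar S).IsSymm := by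
  simp [Matrix.IsSymm, Kstar, hS.eq]

lemma trace_mul_Kop {S : Matrix (Fin n) (Fin n) ℝ} (hS : S.IsSymm) (G : Matrix (Fin n) (Fin n) ℝ) :
    trace (S * Kop G) = trace (Kstar S * G) := by
  have hdiag : trace (diagonal (S *ᵥ eV n) * G) = (S *ᵥ eV n) ⬝ᵥ G.diag := by
    simp [trace, diagonal_mul, dotProduct]
  have hsymm : (S *ᵥ G.diag) ⬝ᵥ eV n = (S *ᵥ eV n) ⬝ᵥ G.diag := by
    rw [dotProduct_comm, dotProduct_mulVec, ← mulVec_transpose, hS.eq, dotProduct_comm]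
  rw [Kop, Kstar, Matrix.mul_sub, Matrix.mul_add, Matrix.smul_mul, Matrix.mul_smul, Matrix.sub_mul,
    trace_sub, trace_add, trace_smul, trace_smul, trace_sub, mul_vecMulVec, mul_vecMulVec,
    trace_vecMulVec, trace_vecMulVec, hdiag, hsymm, dotProduct_comm (S *ᵥ eV n) G.diag]
  simp only [smul_eq_mul]
  ring

lemma isSymm_Fm {d : ℕ} (Pbar P : Matrix (Fin n) (Fin d) ℝ) : (Fm Pbar P).IsSymm := by
  have hgram : ∀ A : Matrix (Fin n) (Fin d) ℝ, (A * Aᵀ).IsSymm := fun A => by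
    simp [Matrix.IsSymm, transpose_mul]
  exact (isSymm_Kop (hgram P)).sub (isSymm_Kop (hgram Pbar))

end Lindenstrauss

section CenteredFrame

variable {n : ℕ} {V : Matrix (Fin n) (Fin (n - 1)) ℝ}

lemma range_mulVecLin_eq_ker_dotProduct (hn : 0 < n) (hV : Vᵀ * V = 1) (hVe : Vᵀ *ᵥ eV n = 0) :
    LinearMap.range V.mulVecLin = LinearMap.ker (dotProductEquiv ℝ (Fin n) (eV n)) := by
  have hinj : Function.Injective V.mulVecLin := fun x y h => by
    simpa [mulVec_mulVec, hV] using congrArg (Vᵀ *ᵥ ·) h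
  have he : dotProductEquiv ℝ (Fin n) (eV n) ≠ 0 := fun h => by
    have := LinearMap.congr_fun h (eV n)
    simp only [dotProductEquiv_apply_apply, dotProduct, eV, mul_one, Finset.sum_const,
      Finset.card_univ, Fintype.card_fin, nsmul_eq_mul, LinearMap.zero_apply,
      Nat.cast_eq_zero] at this
    omega
  refine Submodule.eq_of_le_of_finrank_eq ?_ ?_
  · rintro _ ⟨w, rfl⟩
    simp [dotProduct_mulVec, ← mulVec_transpose, hVe]
  · have hker := Module.Dual.finrank_ker_add_one_of_ne_zero he
    rw [Module.finrank_fin_fun] at hker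
    rw [LinearMap.finrank_range_of_inj hinj, Module.finrank_fin_fun]
    omega

lemma mulVec_transpose_mulVec_of_dotProduct_eq_zero (hn : 0 < n) (hV : Vᵀ * V = 1)
    (hVe : Vᵀ *ᵥ eV n = 0) {p : Fin n → ℝ} (hp : eV n ⬝ᵥ p = 0) : V *ᵥ (Vᵀ *ᵥ p) = p := by
  obtain ⟨w, rfl⟩ : p ∈ LinearMap.range V.mulVecLin := by
    rw [range_mulVecLin_eq_ker_dotProduct hn hV hVe]
    simpa using hp
  simp [mulVec_mulVec, hV]

lemma mul_transpose_mul_of_transpose_mulVec_eq_zero (hn : 0 < n) (hV : Vᵀ * V = 1)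
    (hVe : Vᵀ *ᵥ eV n = 0) {ι : Type*} {A : Matrix (Fin n) ι ℝ} (hA : Aᵀ *ᵥ eV n = 0) :
    V * (Vᵀ * A) = A := by
  ext i k
  have hcol : eV n ⬝ᵥ (fun j => A j k) = 0 := by
    simpa [mulVec, dotProduct, eV, mul_comm] using congrFun hA k
  simpa [mul_apply, mulVec, dotProduct] using
    congrFun (mulVec_transpose_mulVec_of_dotProduct_eq_zero hn hV hVe hcol) i

end CenteredFrame

section Hessian

variable {n d m : ℕ} {Pbar : Matrix (Fin n) (Fin d) ℝ}

lemma QForm_vecMulVec_of_mulVec_eq_zero {P : Matrix (Fin n) (Fin d) ℝ} {u : Fin d → ℝ}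
    (hPu : P *ᵥ u = 0) (w : Fin n → ℝ) :
    QForm Pbar P (vecMulVec w u) = 2 * (u ⬝ᵥ u) * (w ⬝ᵥ (Kstar (Fm Pbar P) *ᵥ w)) := by
  have hcross : P * (vecMulVec w u)ᵀ + vecMulVec w u * Pᵀ = 0 := by
    rw [transpose_vecMulVec, mul_vecMulVec, vecMulVec_mul, vecMul_transpose, hPu]
    simp
  have hsq : vecMulVec w u * (vecMulVec w u)ᵀ = (u ⬝ᵥ u) • vecMulVec w w := by
    rw [transpose_vecMulVec, vecMulVec_mul_vecMulVec, vecMulVec_smul]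
  rw [QForm, hcross, hsq, Kop_zero, Kop_smul, (isSymm_Fm Pbar P).eq, Matrix.mul_smul, trace_smul,
    trace_mul_Kop (isSymm_Fm Pbar P), mul_vecMulVec, trace_vecMulVec, dotProduct_comm _ w]
  simp only [norm_zero, smul_eq_mul]
  ring

lemma posSemidef_of_forall_QForm_nonneg {V : Matrix (Fin n) (Fin m) ℝ}
    {L : Matrix (Fin m) (Fin d) ℝ} {u : Fin d → ℝ} (hLu : L *ᵥ u = 0) (hu : u ≠ 0)
    (hQ : ∀ ΔL : Matrix (Fin m) (Fin d) ℝ, 0 ≤ QForm Pbar (V * L) (V * ΔL)) :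
    (Vᵀ * Kstar (Fm Pbar (V * L)) * V).PosSemidef := by
  have hS := isSymm_Kstar (isSymm_Fm Pbar (V * L))
  refine .of_dotProduct_mulVec_nonneg ?_ fun x => ?_
  · simpa [isHermitian_iff_isSymm, Matrix.IsSymm, transpose_mul, Matrix.mul_assoc] using
      congrArg (fun S => Vᵀ * S * V) hS.eq
  · have hPu : (V * L) *ᵥ u = 0 := by rw [← mulVec_mulVec, hLu, mulVec_zero]
    have hx := hQ (vecMulVec x u)
    rw [mul_vecMulVec, QForm_vecMulVec_of_mulVec_eq_zero hPu] at hx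
    have huu : 0 < u ⬝ᵥ u := by simpa using dotProduct_self_star_pos_iff.mpr hu
    rw [star_trivial, ← mulVec_mulVec, ← mulVec_mulVec, dotProduct_mulVec, vecMul_transpose]
    nlinarith

lemma Fm_eq_zero_of_posSemidef (hn : 0 < n) (hPbar : Pbarᵀ *ᵥ eV n = 0)
    {V : Matrix (Fin n) (Fin (n - 1)) ℝ} (hV : Vᵀ * V = 1) (hVe : Vᵀ *ᵥ eV n = 0)
    {L : Matrix (Fin (n - 1)) (Fin d) ℝ}
    (hstat : Vᵀ * Kstar (Fm Pbar (V * L)) * (V * L) = 0)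
    (hM : (Vᵀ * Kstar (Fm Pbar (V * L)) * V).PosSemidef) :
    Fm Pbar (V * L) = 0 := by
  set F := Fm Pbar (V * L)
  have hF := isSymm_Fm Pbar (V * L)
  have hgram : ∀ {k : ℕ} (A : Matrix (Fin n) (Fin k) ℝ),
      trace (F * Kop (A * Aᵀ)) = trace (Aᵀ * Kstar F * A) := fun A => by
    rw [trace_mul_Kop hF, ← Matrix.mul_assoc, trace_mul_comm, Matrix.mul_assoc]
  have hfit : trace (F * Kop ((V * L) * (V * L)ᵀ)) = 0 := by
    rw [hgram, transpose_mul, Matrix.mul_assoc Lᵀ, Matrix.mul_assoc Lᵀ, hstat, Matrix.mul_zero,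
      trace_zero]
  have hdata : trace (F * Kop (Pbar * Pbarᵀ)) =
      trace ((Vᵀ * Pbar)ᵀ * (Vᵀ * Kstar F * V) * (Vᵀ * Pbar)) := by
    conv_lhs => rw [← mul_transpose_mul_of_transpose_mulVec_eq_zero hn hV hVe hPbar]
    rw [hgram]
    simp only [transpose_mul, Matrix.mul_assoc]
  have hFF : trace (Fᴴ * F) ≤ 0 := by
    have hsplit : F * F = F * Kop ((V * L) * (V * L)ᵀ) - F * Kop (Pbar * Pbarᵀ) := by
      rw [← Matrix.mul_sub]
      rfl
    rw [conjTranspose_eq_transpose_of_trivial, hF.eq, hsplit, trace_sub, hfit, hdata, zero_sub,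
      neg_nonpos]
    exact (hM.conjTranspose_mul_mul_same _).trace_nonneg
  exact trace_conjTranspose_mul_self_eq_zero_iff.mp
    (le_antisymm hFF (posSemidef_conjTranspose_mul_self F).trace_nonneg)

end Hessian

theorem stmt_17_general {n d : ℕ} (hn : 0 < n)
    (Pbar : Matrix (Fin n) (Fin d) ℝ) (hPbar : Pbarᵀ *ᵥ eV n = 0)
    (V : Matrix (Fin n) (Fin (n - 1)) ℝ) (hV : Vᵀ * V = 1) (hVe : Vᵀ *ᵥ eV n = 0)
    (L : Matrix (Fin (n - 1)) (Fin d) ℝ)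
    (hstat : Vᵀ * Kstar (Fm Pbar (V * L)) * (V * L) = 0)
    (hF : Fm Pbar (V * L) ≠ 0)
    (hrank : L.rank < d) :
    ∃ ΔL : Matrix (Fin (n - 1)) (Fin d) ℝ, QForm Pbar (V * L) (V * ΔL) < 0 := by
  by_contra! hQ
  obtain ⟨u, hLu, hu⟩ : ∃ u ∈ LinearMap.ker L.mulVecLin, u ≠ 0 := by
    refine Submodule.exists_mem_ne_zero_of_ne_bot fun hker => hrank.ne ?_
    have hdim := L.mulVecLin.finrank_range_add_finrank_ker
    rw [hker, finrank_bot, Module.finrank_fin_fun, add_zero] at hdim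
    exact hdim
  exact hF (Fm_eq_zero_of_posSemidef hn hPbar hV hVe hstat
    (posSemidef_of_forall_QForm_nonneg hLu hu hQ))

/-- at a nonglobal stationary point `L` of `f_L` with `rank(L) < d`,
the second-order necessary conditions fail. -/
theorem stmt_17 {n d : ℕ} (hn : 0 < n) (hd : 0 < d)
    (Pbar : Matrix (Fin n) (Fin d) ℝ) (hPbar : Pbarᵀ *ᵥ eV n = 0)
    (V : Matrix (Fin n) (Fin (n - 1)) ℝ) (hV : Vᵀ * V = 1) (hVe : Vᵀ *ᵥ eV n = 0)
    (L : Matrix (Fin (n - 1)) (Fin d) ℝ)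
    (hstat : Vᵀ * Kstar (Fm Pbar (V * L)) * (V * L) = 0)
    (hF : Fm Pbar (V * L) ≠ 0)
    (hrank : L.rank < d) :
    ∃ ΔL : Matrix (Fin (n - 1)) (Fin d) ℝ, QForm Pbar (V * L) (V * ΔL) < 0 :=
  stmt_17_general hn Pbar hPbar V hV hVe L hstat hF hrank
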